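/- arXiv:2105.07534 — 2 statements merged into one kernel-verified Lean document; each statement's English description precedes it below -/
import Mathlib

section
/- Let T be a bounded self-adjoint operator on a separable infinite-dimensional complex Hilbert space H with purely continuous spectrum, and let x ∈ σ(T). Then the set {ψ ∈ H : d⁻_{μ_ψ^T}(x) = 0} is dense in H. -/
open MeasureTheory Filter Set Metric
open scoped ENNReal Topology Classical

noncomputable section

/-- `μ` is uniformly `α`-Hölder continuous: there is `C > 0` with
`μ(I) < C |I|^α` for every (nondegenerate) interval `I` with `|I| < 1`. -/
def UnifHolder (μ : Measure ℝ) (α : ℝ) : Prop :=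
  ∃ C > (0 : ℝ), ∀ a b : ℝ, a < b → b - a < 1 →
    μ (Set.Icc a b) < ENNReal.ofReal (C * (b - a) ^ α)

/-- The Fourier transform `μ̂(s) = ∫ e^{-isx} dμ(x)` of a finite Borel measure on `ℝ`. -/
def measureFT (μ : Measure ℝ) (s : ℝ) : ℂ :=
  ∫ x : ℝ, Complex.exp (-(s * x) * Complex.I) ∂μ

/-- The time-average quantum return probability
`W_μ(t) = (1/t) ∫_0^t |μ̂(s)|² ds`. -/
def Wavg (μ : Measure ℝ) (t : ℝ) : ℝ :=
  (1 / t) * ∫ s in Set.Ioc (0 : ℝ) t, ‖measureFT μ s‖ ^ 2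

/-- `μ` is the spectral measure of the pair `(T, ψ)`: it is finite, vanishes outside
the spectrum of `T`, and `∫ f dμ = ⟨ψ, f(T)ψ⟩` for every continuous `f : ℝ → ℝ`,
where `f(T)` is given by the continuous functional calculus. -/
def IsSpectralMeasure {H : Type*} [NormedAddCommGroup H] [InnerProductSpace ℂ H]
    [CompleteSpace H] (T : H →L[ℂ] H) (ψ : H) (μ : Measure ℝ) : Prop :=
  IsFiniteMeasure μ ∧ μ {x : ℝ | (x : ℂ) ∉ spectrum ℂ T} = 0 ∧
    ∀ f : C(ℝ, ℝ), ∫ x, f x ∂μ = (inner ℂ ψ ((cfc (f : ℝ → ℝ) T) ψ) : ℂ).re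

/-- The real part of the spectrum of a bounded operator. -/
def realSpectrum {H : Type*} [NormedAddCommGroup H] [InnerProductSpace ℂ H]
    [CompleteSpace H] (T : H →L[ℂ] H) : Set ℝ :=
  {x : ℝ | (x : ℂ) ∈ spectrum ℂ T}

/-- `μ` is `α`-Hausdorff continuous: `μ(Λ) = 0` for every Borel set `Λ` with
`h^α(Λ) = 0`. -/
def HausdorffCont (μ : Measure ℝ) (α : ℝ) : Prop :=
  ∀ Λ : Set ℝ, MeasurableSet Λ → μH[α] Λ = 0 → μ Λ = 0

/-- The lower pointwise scaling exponent `d⁻_μ(x)`, with value `∞` when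
`μ(B(x;ε)) = 0` for some `ε > 0`. -/
def dLow (μ : Measure ℝ) (x : ℝ) : EReal :=
  if ∃ ε > (0 : ℝ), μ (Metric.ball x ε) = 0 then ⊤
  else Filter.liminf
    (fun ε : ℝ => ((Real.log (μ (Metric.ball x ε)).toReal / Real.log ε : ℝ) : EReal))
    (𝓝[>] (0 : ℝ))

/-- The upper pointwise scaling exponent `d⁺_μ(x)`, with value `∞` when
`μ(B(x;ε)) = 0` for some `ε > 0`. -/
def dUp (μ : Measure ℝ) (x : ℝ) : EReal :=
  if ∃ ε > (0 : ℝ), μ (Metric.ball x ε) = 0 then ⊤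
  else Filter.limsup
    (fun ε : ℝ => ((Real.log (μ (Metric.ball x ε)).toReal / Real.log ε : ℝ) : EReal))
    (𝓝[>] (0 : ℝ))

/-- The lower correlation dimension `D⁻_μ(2)`. -/
def DLow2 (μ : Measure ℝ) : EReal :=
  Filter.liminf
    (fun ε : ℝ =>
      ((Real.log (∫ x, (μ (Metric.ball x ε)).toReal ∂μ) / Real.log ε : ℝ) : EReal))
    (𝓝[>] (0 : ℝ))

/-- The upper correlation dimension `D⁺_μ(2)`. -/
def DUp2 (μ : Measure ℝ) : EReal :=
  Filter.limsup
    (fun ε : ℝ =>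
      ((Real.log (∫ x, (μ (Metric.ball x ε)).toReal ∂μ) / Real.log ε : ℝ) : EReal))
    (𝓝[>] (0 : ℝ))

/-- A set is generic (residual / comeagre in the Baire sense used in the paper)
if it contains a dense `G_δ` set. -/
def Generic {X : Type*} [TopologicalSpace X] (A : Set X) : Prop :=
  ∃ S : Set X, S ⊆ A ∧ IsGδ S ∧ Dense S

/-! Since `μ_ψ` has no atoms, `μ_ψ(B(x;ε)) → 0` for every `ψ`, while `x ∈ σ(T)` provides, at
every scale `ε`, unit vectors fixed by `g_ε(T)` for a plateau function `g_ε` supported in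
`B(x;ε)`. Starting from `ψ₀`, add a gliding hump: geometrically small multiples `a_k χ_k` of such
vectors at scales `e_k` so small that the previous partial sum is negligible under `g_{e_k}(T)`
and that `|log e_k|` dwarfs `|log a_k|`. The limit `φ` is close to `ψ₀` and satisfies
`μ_φ(B(x;e_k)) ≥ (a_k/3)²`, so `log μ_φ(B(x;e_k)) / log e_k → 0`; the ratio is nonnegative for
small `ε` anyway, hence `d⁻_{μ_φ}(x) = 0`. -/

theorem exists_mem_ball_le_norm_apply {𝕜 E ι : Type*} [RCLike 𝕜] [NormedAddCommGroup E]
    [NormedSpace 𝕜 E] [CompleteSpace E] {l : Filter ι} [l.NeBot] (P : ι → E →L[𝕜] E)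
    (hP : ∀ i, ‖P i‖ ≤ 1) (hfix : ∀ᶠ i in l, ∃ χ : E, ‖χ‖ = 1 ∧ P i χ = χ)
    (hsmall : ∀ ψ : E, Tendsto (fun i => ‖P i ψ‖) l (𝓝 0))
    (S : ℕ → Set ι) (hS : ∀ k, S k ∈ l) (ψ₀ : E) {δ : ℝ} (hδ : 0 < δ) :
    ∃ φ ∈ ball ψ₀ δ, ∃ e : ℕ → ι, ∀ k, e k ∈ S k ∧ δ / 6 * (1 / 4) ^ k ≤ ‖P (e k) φ‖ := by
  set a : ℕ → ℝ := fun k => δ / 2 * (1 / 4) ^ k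
  have ha : ∀ k, 0 < a k := fun k => by positivity
  have step : ∀ (k : ℕ) (w : E), ∃ i, (i ∈ S k ∧ ‖P i w‖ ≤ a k / 3) ∧
      ∃ χ : E, ‖χ‖ = 1 ∧ P i χ = χ := fun k w =>
    ((eventually_mem_set.mpr (hS k)).and
      ((hsmall w).eventually (eventually_le_nhds (by positivity)))).and hfix |>.exists
  choose e he χ hχ using step
  let v : ℕ → E := fun k => Nat.rec ψ₀ (fun k w => w + (a k : 𝕜) • χ k w) k
  have hv : ∀ k, v (k + 1) = v k + (a k : 𝕜) • χ k (v k) := fun k => rfl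
  have hstep : ∀ k, ‖(a k : 𝕜) • χ k (v k)‖ = a k := fun k => by
    rw [norm_smul, RCLike.norm_ofReal, abs_of_pos (ha k), (hχ k (v k)).1, mul_one]
  have hdist : ∀ k, dist (v k) (v (k + 1)) ≤ δ / 2 * (1 / 4) ^ k := fun k => by
    rw [hv, dist_self_add_right, hstep]
  obtain ⟨φ, hφ⟩ := cauchySeq_tendsto_of_complete
    (cauchySeq_of_le_geometric _ _ (by norm_num) hdist)
  have htail : ∀ k, ‖φ - v k‖ ≤ 4 / 3 * a k := fun k => by
    rw [← dist_eq_norm',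
      show 4 / 3 * a k = δ / 2 * (1 / 4) ^ k / (1 - 1 / 4) by simp only [a]; ring]
    exact dist_le_of_le_geometric_of_tendsto _ _ (by norm_num) hdist hφ k
  refine ⟨φ, ?_, fun k => e k (v k), fun k => ⟨(he k (v k)).1, ?_⟩⟩
  · rw [mem_ball, dist_eq_norm]
    have h0 : ‖φ - ψ₀‖ ≤ 4 / 3 * (δ / 2) := (htail 0).trans_eq (by simp [a])
    linarith
  · -- `φ = v k + a k χ + (φ - v (k+1))`, where `P` fixes `χ`, is small on `v k`,
    -- and the tail `φ - v (k+1)` is short.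
    set A := P (e k (v k))
    have hsplit : A φ = (a k : 𝕜) • χ k (v k) + (A (v k) + A (φ - v (k + 1))) := by
      rw [← (hχ k (v k)).2, ← map_smul, ← map_add, ← map_add, hv]; congr 1; abel
    have hrest : ‖A (v k) + A (φ - v (k + 1))‖ ≤ a k / 3 + a k / 3 := by
      refine (norm_add_le _ _).trans (add_le_add (he k (v k)).2 ?_)
      calc ‖A (φ - v (k + 1))‖ ≤ ‖φ - v (k + 1)‖ :=
            (A.le_of_opNorm_le (hP _) _).trans_eq (one_mul _)
        _ ≤ 4 / 3 * a (k + 1) := htail (k + 1)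
        _ ≤ a k / 3 := by simp only [a, pow_succ]; nlinarith [ha k]
    have hlower := norm_sub_norm_le ((a k : 𝕜) • χ k (v k)) (-(A (v k) + A (φ - v (k + 1))))
    rw [sub_neg_eq_add, ← hsplit, norm_neg, hstep] at hlower
    have hbound : δ / 6 * (1 / 4) ^ k = a k / 3 := by simp only [a]; ring
    linarith

theorem tendsto_measure_ball_nhdsGT_zero {α : Type*} [MetricSpace α] [MeasurableSpace α]
    [OpensMeasurableSpace α] {μ : Measure α} [IsFiniteMeasure μ] {x : α} (hx : μ {x} = 0) :
    Tendsto (fun ε => μ (ball x ε)) (𝓝[>] 0) (𝓝 0) := by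
  simpa [thickening_singleton, hx] using tendsto_measure_thickening_of_isClosed
    (μ := μ) (s := {x}) ⟨1, one_pos, measure_ne_top _ _⟩ isClosed_singleton

theorem abs_log_le_of_mem_Icc {a b t : ℝ} (ha : 0 < a) (ht : t ∈ Icc a b) :
    |Real.log t| ≤ |Real.log a| + |Real.log b| := by
  have h₁ := Real.log_le_log ha ht.1
  have h₂ := Real.log_le_log (ha.trans_le ht.1) ht.2
  rw [abs_le]
  constructor <;> linarith [neg_abs_le (Real.log a), le_abs_self (Real.log b),
    abs_nonneg (Real.log a), abs_nonneg (Real.log b)]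

theorem abs_log_div_log_le {t e c n : ℝ} (hc : 0 < c) (hn : 0 < n) (ht : |Real.log t| ≤ c)
    (he₀ : 0 < e) (he : e ≤ Real.exp (-(n * c))) :
    |Real.log t / Real.log e| ≤ 1 / n := by
  have hlog : Real.log e ≤ -(n * c) := by simpa using Real.log_le_log he₀ he
  have hnc : 0 < n * c := mul_pos hn hc
  rw [abs_div, abs_of_neg (a := Real.log e) (by linarith), div_le_div_iff₀ (by linarith) hn]
  nlinarith [mul_le_mul_of_nonneg_right ht hn.le]

theorem tendsto_log_div_log_of_le_exp {m e c : ℕ → ℝ} (hc : ∀ k, 1 ≤ c k)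
    (hm : ∀ k, |Real.log (m k)| ≤ c k) (he : ∀ k, e k ∈ Ioc 0 (Real.exp (-((k + 1) * c k)))) :
    Tendsto e atTop (𝓝[>] 0) ∧
      Tendsto (fun k => Real.log (m k) / Real.log (e k)) atTop (𝓝 0) := by
  refine ⟨tendsto_nhdsWithin_of_tendsto_nhds_of_eventually_within _ ?_
    (Eventually.of_forall fun k => (he k).1), ?_⟩
  · refine squeeze_zero (fun k => (he k).1.le) (fun k => (he k).2.trans ?_)
      (Real.tendsto_exp_atBot.comp (tendsto_neg_atTop_atBot.comp
        (tendsto_atTop_add_const_right _ 1 tendsto_natCast_atTop_atTop)))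
    refine Real.exp_le_exp.mpr ?_
    dsimp only [Function.comp_apply]
    nlinarith [hc k]
  · refine squeeze_zero_norm (fun k => ?_) tendsto_one_div_add_atTop_nhds_zero_nat
    exact abs_log_div_log_le (by linarith [hc k]) (by positivity) (hm k) (he k).1 (he k).2

theorem dLow_eq_zero_of_tendsto {μ : Measure ℝ} {x : ℝ}
    (hμ : Tendsto (fun ε => μ (ball x ε)) (𝓝[>] 0) (𝓝 0)) {e : ℕ → ℝ}
    (he : Tendsto e atTop (𝓝[>] 0)) (hpos : ∀ k, μ (ball x (e k)) ≠ 0)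
    (hratio : Tendsto (fun k => Real.log (μ (ball x (e k))).toReal / Real.log (e k)) atTop
      (𝓝 0)) :
    dLow μ x = 0 := by
  have hnull : ¬ ∃ ε > (0 : ℝ), μ (ball x ε) = 0 := by
    rintro ⟨ε, hε, hzero⟩
    obtain ⟨k, hk⟩ := ((tendsto_nhdsWithin_iff.mp he).1.eventually (gt_mem_nhds hε)).exists
    exact hpos k (measure_mono_null (ball_subset_ball hk.le) hzero)
  rw [dLow, if_neg hnull]
  apply le_antisymm
  · exact he.liminf_le_liminf_comp.trans (EReal.tendsto_coe.mpr hratio).liminf_eq.le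
  · refine le_liminf_of_le (by isBoundedDefault) ?_
    have hsmall : ∀ᶠ ε in 𝓝[>] (0 : ℝ), μ (ball x ε) ≤ 1 :=
      hμ.eventually (eventually_le_nhds zero_lt_one)
    filter_upwards [hsmall, Ioo_mem_nhdsGT zero_lt_one] with ε hball hε
    have hnum : Real.log (μ (ball x ε)).toReal ≤ 0 :=
      Real.log_nonpos ENNReal.toReal_nonneg (ENNReal.toReal_le_of_le_ofReal zero_le_one
        (by simpa using hball))
    exact EReal.coe_nonneg.mpr (div_nonneg_of_nonpos hnum (Real.log_neg hε.1 hε.2).le)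

def plateau (x ε y : ℝ) : ℝ :=
  Real.smoothTransition (2 - 2 * |y - x| / ε)

section Plateau

variable {x ε : ℝ}

@[fun_prop]
theorem continuous_plateau (x ε : ℝ) : Continuous (plateau x ε) := by
  unfold plateau; fun_prop

theorem abs_plateau_le_one (x ε y : ℝ) : |plateau x ε y| ≤ 1 := by
  unfold plateau
  rw [abs_of_nonneg (Real.smoothTransition.nonneg _)]
  exact Real.smoothTransition.le_one _

theorem plateau_eq_zero (hε : 0 < ε) {y : ℝ} (hy : y ∉ ball x ε) : plateau x ε y = 0 := by
  rw [mem_ball, Real.dist_eq, not_lt] at hy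
  refine Real.smoothTransition.zero_of_nonpos ?_
  rw [sub_nonpos, le_div_iff₀ hε]
  linarith

theorem plateau_self : plateau x ε x = 1 :=
  Real.smoothTransition.one_of_one_le (by simp)

theorem plateau_eventually_eq_one (hε : 0 < ε) : ∀ᶠ y in 𝓝 x, plateau x ε y = 1 := by
  filter_upwards [ball_mem_nhds x (half_pos hε)] with y hy
  rw [mem_ball, Real.dist_eq] at hy
  refine Real.smoothTransition.one_of_one_le ?_
  rw [le_sub_comm, div_le_iff₀ hε]
  linarith

end Plateau

section SpectralMeasure

variable {H : Type*} [NormedAddCommGroup H] [InnerProductSpace ℂ H] [CompleteSpace H]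
  {T : H →L[ℂ] H} {ψ : H} {μ : Measure ℝ}

theorem IsSpectralMeasure.integral_sq (hμ : IsSpectralMeasure T ψ μ) {g : ℝ → ℝ}
    (hg : Continuous g) :
    ∫ y, g y ^ 2 ∂μ = ‖cfc g T ψ‖ ^ 2 := by
  set A := cfc g T
  have hA : IsSelfAdjoint A := cfc_predicate g T
  have hsq : cfc (fun y => g y ^ 2) T = A * A := by
    rw [← cfc_mul g g T]
    exact cfc_congr fun y _ => sq (g y)
  have h := hμ.2.2 ⟨fun y => g y ^ 2, by fun_prop⟩
  simp only [ContinuousMap.coe_mk] at h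
  rw [h, hsq, mul_apply_eq_comp, ← hA.adjoint_eq,
    ContinuousLinearMap.adjoint_inner_right, hA.adjoint_eq, inner_self_eq_norm_sq_to_K]
  norm_cast

theorem IsSpectralMeasure.toReal_measure_le_norm_sq (hT : IsSelfAdjoint T)
    (hμ : IsSpectralMeasure T ψ μ) (s : Set ℝ) :
    (μ s).toReal ≤ ‖ψ‖ ^ 2 := by
  have := hμ.1
  have huniv := hμ.integral_sq continuous_const (g := fun _ => 1)
  rw [cfc_const_one ℝ T] at huniv
  simp only [one_pow, integral_const, smul_eq_mul, mul_one, one_apply_eq_self] at huniv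
  exact huniv ▸ measureReal_mono (subset_univ s)

theorem IsSpectralMeasure.norm_cfc_apply_sq_le (hμ : IsSpectralMeasure T ψ μ) {g : ℝ → ℝ}
    (hg : Continuous g) (hg₁ : ∀ y, |g y| ≤ 1)
    {s : Set ℝ} (hs : MeasurableSet s) (hg₀ : ∀ y ∉ s, g y = 0) :
    ‖cfc g T ψ‖ ^ 2 ≤ (μ s).toReal := by
  have := hμ.1
  rw [← hμ.integral_sq hg, ← measureReal_def, ← integral_indicator_one hs]
  refine integral_mono_of_nonneg (Eventually.of_forall fun y => sq_nonneg _)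
    ((integrable_const 1).indicator hs) (Eventually.of_forall fun y => ?_)
  by_cases hy : y ∈ s
  · simpa [hy, sq_le_one_iff_abs_le_one] using hg₁ y
  · simp [hy, hg₀ y hy]

theorem exists_norm_eq_one_cfc_apply_eq_self (hT : IsSelfAdjoint T) {x : ℝ}
    (hx : x ∈ spectrum ℝ T) {f : ℝ → ℝ} (hf : Continuous f) (hf₁ : ∀ᶠ y in 𝓝 x, f y = 1) :
    ∃ χ : H, ‖χ‖ = 1 ∧ cfc f T χ = χ := by
  obtain ⟨r, hr, hball⟩ := Metric.eventually_nhds_iff_ball.mp hf₁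
  -- `plateau x r (T)` is nonzero since `plateau x r x = 1`, and `f (T)` fixes its range.
  have hmul : cfc f T * cfc (plateau x r) T = cfc (plateau x r) T := by
    rw [← cfc_mul f (plateau x r) T]
    refine cfc_congr fun y _ => ?_
    by_cases hy : y ∈ ball x r
    · rw [hball y hy, one_mul]
    · rw [plateau_eq_zero hr hy, mul_zero]
  have hne : cfc (plateau x r) T ≠ 0 := by
    intro h0
    have h1 : (1 : ℝ) ∈ spectrum ℝ (cfc (plateau x r) T) := by
      rw [cfc_map_spectrum (plateau x r) T]
      exact ⟨x, hx, plateau_self⟩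
    simp [h0, spectrum.mem_iff] at h1
  obtain ⟨η, hη⟩ := DFunLike.ne_iff.mp hne
  set v := cfc (plateau x r) T η
  refine ⟨‖v‖⁻¹ • v, ?_, ?_⟩
  · rw [norm_smul, norm_inv, norm_norm, inv_mul_cancel₀ (norm_ne_zero_iff.mpr hη)]
  · rw [ContinuousLinearMap.map_smul_of_tower, ← mul_apply_eq_comp, hmul]

theorem norm_cfc_plateau_le_one (x ε : ℝ) : ‖cfc (plateau x ε) T‖ ≤ 1 :=
  norm_cfc_le zero_le_one fun y _ => abs_plateau_le_one x ε y

theorem IsSpectralMeasure.tendsto_norm_cfc_plateau_apply (hμ : IsSpectralMeasure T ψ μ)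
    {x : ℝ} (hball : Tendsto (fun ε => μ (ball x ε)) (𝓝[>] 0) (𝓝 0)) :
    Tendsto (fun ε => ‖cfc (plateau x ε) T ψ‖) (𝓝[>] 0) (𝓝 0) := by
  have hsqrt : Tendsto (fun ε => √(μ (ball x ε)).toReal) (𝓝[>] 0) (𝓝 0) := by
    simpa using ((ENNReal.tendsto_toReal ENNReal.zero_ne_top).comp hball).sqrt
  refine squeeze_zero' (Eventually.of_forall fun _ => norm_nonneg _) ?_ hsqrt
  filter_upwards [self_mem_nhdsWithin] with ε hε
  exact Real.le_sqrt_of_sq_le (hμ.norm_cfc_apply_sq_le (continuous_plateau x ε)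
    (abs_plateau_le_one x ε) measurableSet_ball fun _ => plateau_eq_zero hε)

end SpectralMeasure

theorem stmt_12_general {H : Type*} [NormedAddCommGroup H] [InnerProductSpace ℂ H] [CompleteSpace H]
    (T : H →L[ℂ] H) (hT : IsSelfAdjoint T)
    (μm : H → Measure ℝ) (hμm : ∀ ψ : H, IsSpectralMeasure T ψ (μm ψ))
    (hcont : ∀ (ψ : H) (x : ℝ), μm ψ {x} = 0)
    (x : ℝ) (hx : x ∈ realSpectrum T) :
    Dense {ψ : H | dLow (μm ψ) x = 0} := by
  have hxR : x ∈ spectrum ℝ T := (spectrum.algebraMap_mem_iff ℂ).mp hx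
  have hball (ψ : H) : Tendsto (fun ε => μm ψ (ball x ε)) (𝓝[>] 0) (𝓝 0) :=
    have := (hμm ψ).1
    tendsto_measure_ball_nhdsGT_zero (hcont ψ x)
  refine Metric.dense_iff.mpr fun ψ₀ δ hδ => ?_
  -- `c k` bounds `|log μ_φ(B(x; e k))|`, so `e k ≤ exp (-(k + 1) c k)` keeps the ratio
  -- below `1 / (k + 1)`.
  set lo : ℕ → ℝ := fun k => (δ / 6 * (1 / 4) ^ k) ^ 2
  set M := (‖ψ₀‖ + δ) ^ 2
  set c : ℕ → ℝ := fun k => 1 + (|Real.log (lo k)| + |Real.log M|)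
  obtain ⟨φ, hφ, e, he⟩ := exists_mem_ball_le_norm_apply (l := 𝓝[>] 0)
    (fun ε => cfc (plateau x ε) T)
    (norm_cfc_plateau_le_one x) (eventually_nhdsWithin_of_forall fun ε hε =>
      exists_norm_eq_one_cfc_apply_eq_self hT hxR (continuous_plateau x ε)
        (plateau_eventually_eq_one hε))
    (fun ψ => (hμm ψ).tendsto_norm_cfc_plateau_apply (hball ψ))
    (fun k => Ioc (0 : ℝ) (Real.exp (-((k + 1) * c k))))
    (fun k => Ioc_mem_nhdsGT (Real.exp_pos _)) ψ₀ hδ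
  have hmeas (k : ℕ) : (μm φ (ball x (e k))).toReal ∈ Icc (lo k) M := by
    refine ⟨(pow_le_pow_left₀ (by positivity) (he k).2 2).trans
      ((hμm φ).norm_cfc_apply_sq_le (continuous_plateau x _) (abs_plateau_le_one x _)
        measurableSet_ball fun _ => plateau_eq_zero (he k).1.1),
      ((hμm φ).toReal_measure_le_norm_sq hT _).trans (pow_le_pow_left₀ (norm_nonneg _) ?_ 2)⟩
    linarith [norm_le_norm_add_norm_sub' φ ψ₀, (mem_ball_iff_norm.mp hφ).le]
  obtain ⟨he₀, hratio⟩ := tendsto_log_div_log_of_le_exp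
    (fun k => le_add_of_nonneg_right (by positivity))
    (fun k => (abs_log_le_of_mem_Icc (by positivity) (hmeas k)).trans (le_add_of_nonneg_left
      zero_le_one)) (fun k => (he k).1)
  refine ⟨φ, hφ, dLow_eq_zero_of_tendsto (hball φ) he₀ (fun k h0 => ?_) hratio⟩
  have hlo := (hmeas k).1
  rw [h0, ENNReal.toReal_zero] at hlo
  exact not_le.mpr (by positivity) hlo

/-- For `T` with purely continuous spectrum and `x ∈ σ(T)`, the set
`{ψ | d⁻_{μ_ψ}(x) = 0}` is dense in `H`. -/
theorem stmt_12 {H : Type*} [NormedAddCommGroup H] [InnerProductSpace ℂ H] [CompleteSpace H]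
    [TopologicalSpace.SeparableSpace H] (hinf : ¬ FiniteDimensional ℂ H)
    (T : H →L[ℂ] H) (hT : IsSelfAdjoint T)
    (μm : H → Measure ℝ) (hμm : ∀ ψ : H, IsSpectralMeasure T ψ (μm ψ))
    (hcont : ∀ (ψ : H) (x : ℝ), μm ψ {x} = 0)
    (x : ℝ) (hx : x ∈ realSpectrum T) :
    Dense {ψ : H | dLow (μm ψ) x = 0} :=
  stmt_12_general T hT μm hμm hcont x hx
end
end

section
/- Let T be a bounded self-adjoint operator on a separable infinite-dimensional complex Hilbert space H and let x ∈ ℝ. Then both sets B₋(x) := {ψ ∈ H : d⁺_{μ_ψ^T}(x) = ∞} and B₊(x) := {ψ ∈ H : d⁻_{μ_ψ^T}(x) = 0} are G_δ subsets of H. -/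
open MeasureTheory Filter Set Metric
open scoped ENNReal Topology Classical

noncomputable section

section Aux

lemma myEReal_eq_top (L : EReal) (h : ∀ N : ℕ, ((N : ℝ) : EReal) ≤ L) : L = ⊤ := by
  induction L using EReal.rec with
  | bot => exact absurd (h 0) (by simp)
  | coe r =>
    obtain ⟨N, hN⟩ := exists_nat_gt r
    exact absurd (EReal.coe_le_coe_iff.1 (h N)) (not_le.2 hN)
  | top => rfl

lemma myEReal_eq_zero (L : EReal)
    (h1 : ∀ N : ℕ, L ≤ ((1 / (N + 1) : ℝ) : EReal))
    (h2 : ∀ N : ℕ, ((-(1 / (N + 1)) : ℝ) : EReal) ≤ L) : L = 0 := by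
  induction L using EReal.rec with
  | bot => exact absurd (le_bot_iff.1 (h2 0)) (EReal.coe_ne_bot _)
  | coe r =>
    have hr1 : ∀ N : ℕ, r ≤ 1 / (N + 1) := fun N => EReal.coe_le_coe_iff.1 (h1 N)
    have hr2 : ∀ N : ℕ, -(1 / (N + 1 : ℝ)) ≤ r := fun N => EReal.coe_le_coe_iff.1 (h2 N)
    have : r = 0 := by
      refine le_antisymm ?_ ?_
      · by_contra h
        obtain ⟨n, hn⟩ := exists_nat_one_div_lt (not_le.1 h)
        exact absurd (hr1 n) (not_le.2 hn)
      · by_contra h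
        obtain ⟨n, hn⟩ := exists_nat_one_div_lt (neg_pos.2 (not_le.1 h))
        have := hr2 n
        linarith
    exact_mod_cast this
  | top => exact absurd (top_le_iff.1 (h1 0)) (EReal.coe_ne_top _)

lemma myFreq {p : ℝ → Prop} (h : ∀ δ > (0:ℝ), ∃ ε, 0 < ε ∧ ε < δ ∧ p ε) :
    ∃ᶠ ε in 𝓝[>] (0:ℝ), p ε := by
  rw [frequently_iff]
  intro U hU
  obtain ⟨u, hu, hsub⟩ := mem_nhdsGT_iff_exists_Ioo_subset.1 hU
  obtain ⟨ε, hε0, hεu, hp⟩ := h u hu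
  exact ⟨ε, hsub ⟨hε0, hεu⟩, hp⟩

lemma myFreq' {p : ℝ → Prop} (h : ∃ᶠ ε in 𝓝[>] (0:ℝ), p ε) :
    ∀ δ > (0:ℝ), ∃ ε, 0 < ε ∧ ε < δ ∧ p ε := by
  intro δ hδ
  obtain ⟨ε, hε, hp⟩ := frequently_iff.1 h (Ioo_mem_nhdsGT_of_mem ⟨le_refl 0, hδ⟩)
  exact ⟨ε, hε.1, hε.2, hp⟩


lemma dUp_eq_top_iff (μ : Measure ℝ) [IsFiniteMeasure μ] (x : ℝ) :
    dUp μ x = ⊤ ↔ ∀ N : ℕ, ∀ δ > (0:ℝ), ∃ ε, 0 < ε ∧ ε < δ ∧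
      μ (Metric.closedBall x ε) < ENNReal.ofReal (ε ^ N) := by
  by_cases hnull : ∃ ε > (0:ℝ), μ (Metric.ball x ε) = 0
  · simp only [dUp, if_pos hnull]
    refine ⟨fun _ N δ hδ => ?_, fun _ => trivial⟩
    obtain ⟨ε₀, hε₀, hm⟩ := hnull
    refine ⟨min δ ε₀ / 2, by positivity, ?_, ?_⟩
    · calc min δ ε₀ / 2 ≤ δ / 2 := by
            have := min_le_left δ ε₀; linarith
        _ < δ := by linarith
    · have hsub : Metric.closedBall x (min δ ε₀ / 2) ⊆ Metric.ball x ε₀ := by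
        apply Metric.closedBall_subset_ball
        have := min_le_right δ ε₀; linarith
      calc μ (Metric.closedBall x (min δ ε₀ / 2)) ≤ μ (Metric.ball x ε₀) := measure_mono hsub
        _ = 0 := hm
        _ < ENNReal.ofReal ((min δ ε₀ / 2) ^ N) := by
            apply ENNReal.ofReal_pos.2; positivity
  · have hnn := hnull
    push_neg at hnull
    have hpos : ∀ ε > (0:ℝ), 0 < (μ (Metric.ball x ε)).toReal := fun ε hε =>
      ENNReal.toReal_pos (hnull ε hε) (measure_ne_top μ _)
    simp only [dUp, if_neg hnn]
    constructor
    · intro htop N δ hδ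
      -- limsup = ⊤, so frequently the quotient exceeds N+1
      have hfreq : ∃ᶠ ε in 𝓝[>] (0:ℝ),
          (((N:ℝ) + 1 : ℝ) : EReal) <
            ((Real.log (μ (Metric.ball x ε)).toReal / Real.log ε : ℝ) : EReal) := by
        by_contra hc
        rw [not_frequently] at hc
        have : Filter.limsup
            (fun ε : ℝ => ((Real.log (μ (Metric.ball x ε)).toReal / Real.log ε : ℝ) : EReal))
            (𝓝[>] (0:ℝ)) ≤ (((N:ℝ) + 1 : ℝ) : EReal) := by
          apply limsup_le_of_le (by isBoundedDefault)
          filter_upwards [hc] with ε hε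
          exact not_lt.1 hε
        rw [htop] at this
        exact absurd (top_le_iff.1 this) (EReal.coe_ne_top _)
      obtain ⟨ε, hε0, hεδ, hq⟩ := myFreq' hfreq (min δ 1) (lt_min hδ one_pos)
      have hε1 : ε < 1 := lt_of_lt_of_le hεδ (min_le_right _ _)
      have hεδ' : ε < δ := lt_of_lt_of_le hεδ (min_le_left _ _)
      set m := (μ (Metric.ball x ε)).toReal with hm
      have hm0 : 0 < m := hpos ε hε0
      have hlogε : Real.log ε < 0 := Real.log_neg hε0 hε1
      have hq' : ((N:ℝ) + 1) < Real.log m / Real.log ε := EReal.coe_lt_coe_iff.1 hq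
      have hlm : Real.log m < ((N:ℝ) + 1) * Real.log ε := (lt_div_iff_of_neg hlogε).1 hq'
      have hlm2 : Real.log m < (N:ℝ) * Real.log ε := by nlinarith [hlogε]
      have hmlt : m < ε ^ N := by
        have : Real.log m < Real.log (ε ^ N) := by
          rw [Real.log_pow]; exact hlm2
        exact (Real.log_lt_log_iff hm0 (pow_pos hε0 N)).1 this
      -- pick ε' < ε with m < ε'^N
      have hev : ∀ᶠ t in 𝓝[<] ε, m < t ^ N ∧ 0 < t := by
        have h1 : ∀ᶠ t in 𝓝 ε, m < t ^ N := by
          have hc : ContinuousAt (fun t : ℝ => t ^ N) ε := (continuous_pow N).continuousAt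
          exact continuousAt_const.eventually_lt hc hmlt
        have h2 : ∀ᶠ t in 𝓝 ε, 0 < t := eventually_gt_nhds hε0
        exact ((h1.and h2).filter_mono nhdsWithin_le_nhds)
      obtain ⟨ε', hε'⟩ := (hev.and self_mem_nhdsWithin).exists
      refine ⟨ε', hε'.1.2, lt_trans hε'.2 hεδ', ?_⟩
      calc μ (Metric.closedBall x ε') ≤ μ (Metric.ball x ε) :=
            measure_mono (Metric.closedBall_subset_ball hε'.2)
        _ = ENNReal.ofReal m := (ENNReal.ofReal_toReal (measure_ne_top μ _)).symm
        _ < ENNReal.ofReal (ε' ^ N) := by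
            exact (ENNReal.ofReal_lt_ofReal_iff (pow_pos hε'.1.2 N)).2 hε'.1.1
    · intro hP
      apply myEReal_eq_top
      intro N
      refine le_limsup_of_frequently_le (myFreq ?_)
      intro δ hδ
      obtain ⟨ε, hε0, hεδ, hlt⟩ := hP N (min δ 1) (lt_min hδ one_pos)
      have hε1 : ε < 1 := lt_of_lt_of_le hεδ (min_le_right _ _)
      refine ⟨ε, hε0, lt_of_lt_of_le hεδ (min_le_left _ _), ?_⟩
      set m := (μ (Metric.ball x ε)).toReal with hm
      have hm0 : 0 < m := hpos ε hε0
      have hblt : μ (Metric.ball x ε) < ENNReal.ofReal (ε ^ N) :=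
        lt_of_le_of_lt (measure_mono Metric.ball_subset_closedBall) hlt
      have hmlt : m < ε ^ N := by
        have := ENNReal.lt_ofReal_iff_toReal_lt (measure_ne_top μ _) |>.1 hblt
        exact this
      have hlogε : Real.log ε < 0 := Real.log_neg hε0 hε1
      have hlm : Real.log m < (N:ℝ) * Real.log ε := by
        have := Real.log_lt_log hm0 hmlt
        rwa [Real.log_pow] at this
      have : (N:ℝ) < Real.log m / Real.log ε := by
        rw [lt_div_iff_of_neg hlogε]; linarith
      exact le_of_lt (EReal.coe_lt_coe_iff.2 this)

lemma dLow_eq_zero_iff (μ : Measure ℝ) [IsFiniteMeasure μ] (x : ℝ) :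
    dLow μ x = 0 ↔ ∀ N : ℕ, ∀ δ > (0:ℝ), ∃ ε, 0 < ε ∧ ε < δ ∧
      ENNReal.ofReal (ε ^ (1/((N:ℝ)+1))) < μ (Metric.ball x ε) := by
  by_cases hnull : ∃ ε > (0:ℝ), μ (Metric.ball x ε) = 0
  · simp only [dLow, if_pos hnull]
    constructor
    · intro h; exact absurd h (by simp)
    · intro hQ
      exfalso
      obtain ⟨ε₀, hε₀, h0⟩ := hnull
      obtain ⟨ε, hε0, hεlt, hlt⟩ := hQ 0 ε₀ hε₀
      have : μ (Metric.ball x ε) ≤ μ (Metric.ball x ε₀) :=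
        measure_mono (Metric.ball_subset_ball (le_of_lt hεlt))
      rw [h0] at this
      have hp : (0:ℝ≥0∞) < ENNReal.ofReal (ε ^ (1/((0:ℕ):ℝ)+1)) := by
        exact ENNReal.ofReal_pos.2 (Real.rpow_pos_of_pos hε0 _)
      exact absurd (le_antisymm this zero_le) (by
        intro h
        rw [h] at hlt
        exact absurd hlt (by
          simp only [not_lt]
          exact zero_le |>.trans (le_of_eq rfl) |>.trans_eq rfl |>.trans (le_refl _) ))
  · have hnn := hnull
    push_neg at hnull
    have hpos : ∀ ε > (0:ℝ), 0 < (μ (Metric.ball x ε)).toReal := fun ε hε =>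
      ENNReal.toReal_pos (hnull ε hε) (measure_ne_top μ _)
    simp only [dLow, if_neg hnn]
    constructor
    · intro h0 N δ hδ
      have hfreq : ∃ᶠ ε in 𝓝[>] (0:ℝ),
          ((Real.log (μ (Metric.ball x ε)).toReal / Real.log ε : ℝ) : EReal) <
            ((1/((N:ℝ)+1) : ℝ) : EReal) := by
        by_contra hc
        rw [not_frequently] at hc
        have hle : ((1/((N:ℝ)+1) : ℝ) : EReal) ≤ Filter.liminf
            (fun ε : ℝ => ((Real.log (μ (Metric.ball x ε)).toReal / Real.log ε : ℝ) : EReal))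
            (𝓝[>] (0:ℝ)) := by
          apply le_liminf_of_le (by isBoundedDefault)
          filter_upwards [hc] with ε hε
          exact not_lt.1 hε
        rw [h0] at hle
        have : (1/((N:ℝ)+1) : ℝ) ≤ 0 := by
          rw [show ((0:EReal)) = (((0:ℝ)):EReal) from rfl] at hle
          exact EReal.coe_le_coe_iff.1 hle
        have hNp : (0:ℝ) < 1/((N:ℝ)+1) := by positivity
        linarith
      obtain ⟨ε, hε0, hεδ, hq⟩ := myFreq' hfreq (min δ 1) (lt_min hδ one_pos)
      have hε1 : ε < 1 := lt_of_lt_of_le hεδ (min_le_right _ _)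
      refine ⟨ε, hε0, lt_of_lt_of_le hεδ (min_le_left _ _), ?_⟩
      set m := (μ (Metric.ball x ε)).toReal with hm
      have hm0 : 0 < m := hpos ε hε0
      have hlogε : Real.log ε < 0 := Real.log_neg hε0 hε1
      have hq' : Real.log m / Real.log ε < 1/((N:ℝ)+1) := EReal.coe_lt_coe_iff.1 hq
      have hkey : (1/((N:ℝ)+1)) * Real.log ε < Real.log m := by
        have := (div_lt_iff_of_neg hlogε).1 hq'
        linarith [this]
      have hrlt : ε ^ (1/((N:ℝ)+1)) < m := by
        have hlog : Real.log (ε ^ (1/((N:ℝ)+1))) < Real.log m := by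
          rw [Real.log_rpow hε0]; exact hkey
        exact (Real.log_lt_log_iff (Real.rpow_pos_of_pos hε0 _) hm0).1 hlog
      calc ENNReal.ofReal (ε ^ (1/((N:ℝ)+1))) < ENNReal.ofReal m :=
            (ENNReal.ofReal_lt_ofReal_iff hm0).2 hrlt
        _ = μ (Metric.ball x ε) := ENNReal.ofReal_toReal (measure_ne_top μ _)
    · intro hQ
      apply myEReal_eq_zero
      · intro N
        refine liminf_le_of_frequently_le (myFreq ?_)
        intro δ hδ
        obtain ⟨ε, hε0, hεδ, hlt⟩ := hQ N (min δ 1) (lt_min hδ one_pos)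
        have hε1 : ε < 1 := lt_of_lt_of_le hεδ (min_le_right _ _)
        refine ⟨ε, hε0, lt_of_lt_of_le hεδ (min_le_left _ _), ?_⟩
        set m := (μ (Metric.ball x ε)).toReal with hm
        have hm0 : 0 < m := hpos ε hε0
        have hlogε : Real.log ε < 0 := Real.log_neg hε0 hε1
        have hrlt : ε ^ (1/((N:ℝ)+1)) < m := by
          have := (ENNReal.ofReal_lt_iff_lt_toReal
            (le_of_lt (Real.rpow_pos_of_pos hε0 _)) (measure_ne_top μ _)).1 hlt
          exact this
        have hkey : (1/((N:ℝ)+1)) * Real.log ε < Real.log m := by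
          have hlog := Real.log_lt_log (Real.rpow_pos_of_pos hε0 _) hrlt
          rwa [Real.log_rpow hε0] at hlog
        have : Real.log m / Real.log ε < 1/((N:ℝ)+1) := by
          rw [div_lt_iff_of_neg hlogε]; linarith
        exact le_of_lt (EReal.coe_lt_coe_iff.2 this)
      · intro N
        set M := (μ (Set.univ : Set ℝ)).toReal with hM
        have hM0 : 0 ≤ M := ENNReal.toReal_nonneg
        set B := Real.log (M + 1) with hB
        have hB0 : 0 ≤ B := Real.log_nonneg (by linarith)
        set δ₀ := Real.exp (-(((N:ℝ)+1)*B) - 1) with hδ₀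
        refine le_liminf_of_le (by isBoundedDefault) ?_
        filter_upwards [Ioo_mem_nhdsGT_of_mem ⟨le_refl (0:ℝ), Real.exp_pos _⟩] with ε hε
        obtain ⟨hε0, hεδ⟩ := hε
        have hlogε' : Real.log ε < -(((N:ℝ)+1)*B) - 1 := by
          have := Real.log_lt_log hε0 hεδ
          rwa [Real.log_exp] at this
        have hlogε : Real.log ε < 0 := by nlinarith
        set m := (μ (Metric.ball x ε)).toReal with hm
        have hm0 : 0 < m := hpos ε hε0
        have hmM : m ≤ M := ENNReal.toReal_mono (measure_ne_top μ _)
          (measure_mono (Set.subset_univ _))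
        have hlogm : Real.log m ≤ B := Real.log_le_log (by linarith) (by linarith)
        have hkey : Real.log m ≤ Real.log ε * (-(1/((N:ℝ)+1))) := by
          have h1 : Real.log ε * (-(1/((N:ℝ)+1))) = (-Real.log ε)/((N:ℝ)+1) := by ring
          rw [h1, le_div_iff₀ (by positivity)]
          nlinarith [mul_nonneg (sub_nonneg.2 hlogm) (by positivity : (0:ℝ) ≤ (N:ℝ)+1)]
        have : -(1/((N:ℝ)+1)) ≤ Real.log m / Real.log ε := by
          rw [le_div_iff_of_neg hlogε]; linarith
        exact EReal.coe_le_coe_iff.2 this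

section Helpers
variable {H : Type*} [NormedAddCommGroup H] [InnerProductSpace ℂ H] [CompleteSpace H]
  (T : H →L[ℂ] H)

lemma cont_pairing (f : C(ℝ, ℝ)) :
    Continuous fun ψ : H => (inner ℂ ψ ((cfc (⇑f : ℝ → ℝ) T) ψ) : ℂ).re :=
  Complex.continuous_re.comp (continuous_id.inner ((cfc (⇑f : ℝ → ℝ) T).continuous))

lemma indicator_le_urysohn {K : Set ℝ} (f : C(ℝ, ℝ)) (hf1 : Set.EqOn f 1 K)
    (hf01 : ∀ y, f y ∈ Set.Icc (0:ℝ) 1) (y : ℝ) : K.indicator (1 : ℝ → ℝ) y ≤ f y := by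
  by_cases hy : y ∈ K
  · rw [Set.indicator_of_mem hy]; exact le_of_eq (hf1 hy).symm
  · rw [Set.indicator_of_notMem hy]; exact (hf01 y).1

lemma urysohn_le_indicator {U : Set ℝ} (f : C(ℝ, ℝ)) (hf0 : Set.EqOn f 0 Uᶜ)
    (hf01 : ∀ y, f y ∈ Set.Icc (0:ℝ) 1) (y : ℝ) : f y ≤ U.indicator (1 : ℝ → ℝ) y := by
  by_cases hy : y ∈ U
  · rw [Set.indicator_of_mem hy]; exact (hf01 y).2
  · rw [Set.indicator_of_notMem hy]; exact le_of_eq (hf0 hy)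


end Helpers

section Semicont

variable {H : Type*} [NormedAddCommGroup H] [InnerProductSpace ℂ H] [CompleteSpace H]
  (T : H →L[ℂ] H) (μm : H → Measure ℝ)
  (hfin : ∀ ψ : H, IsFiniteMeasure (μm ψ))
  (hint : ∀ (f : C(ℝ, ℝ)) (ψ : H),
    ∫ x, f x ∂(μm ψ) = (inner ℂ ψ ((cfc (⇑f : ℝ → ℝ) T) ψ) : ℂ).re)

include hfin hint

lemma isOpen_measure_closedBall_lt (K : Set ℝ) (hK : IsCompact K) (r : ℝ) (hr : 0 < r) :
    IsOpen {ψ : H | μm ψ K < ENNReal.ofReal r} := by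
  rw [isOpen_iff_mem_nhds]
  intro ψ₀ hψ₀
  haveI := hfin ψ₀
  simp only [Set.mem_setOf_eq] at hψ₀
  obtain ⟨U, hKU, hUopen, hUlt⟩ := K.exists_isOpen_lt_of_lt _ hψ₀
  obtain ⟨f, hf1, hf0, hfc, hf01⟩ := exists_continuous_one_zero_of_isCompact hK
    hUopen.isClosed_compl (Set.disjoint_left.mpr fun a ha h2 => h2 (hKU ha))
  set c : H → ℝ := fun ψ => (inner ℂ ψ ((cfc (⇑f : ℝ → ℝ) T) ψ) : ℂ).re with hc
  have hVopen : IsOpen {ψ : H | c ψ < r} := isOpen_lt (cont_pairing T f) continuous_const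
  have hmem : ψ₀ ∈ {ψ : H | c ψ < r} := by
    simp only [Set.mem_setOf_eq, hc]
    rw [← hint f ψ₀]
    have hle : ∫ y, f y ∂(μm ψ₀) ≤ ∫ y, U.indicator (1:ℝ→ℝ) y ∂(μm ψ₀) := by
      apply integral_mono (f.continuous.integrable_of_hasCompactSupport hfc)
        ((integrable_const (1:ℝ)).indicator hUopen.measurableSet)
        (urysohn_le_indicator f hf0 hf01)
    rw [integral_indicator_one hUopen.measurableSet, measureReal_def] at hle
    have : (μm ψ₀ U).toReal < r :=
      (ENNReal.lt_ofReal_iff_toReal_lt (measure_ne_top _ _)).1 hUlt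
    linarith
  refine Filter.mem_of_superset (hVopen.mem_nhds hmem) ?_
  intro ψ hψ
  haveI := hfin ψ
  simp only [Set.mem_setOf_eq] at hψ ⊢
  have hKm : MeasurableSet K := hK.measurableSet
  have hge : (μm ψ K).toReal ≤ c ψ := by
    show (μm ψ K).toReal ≤ (inner ℂ ψ ((cfc (⇑f : ℝ → ℝ) T) ψ) : ℂ).re
    rw [← hint f ψ, ← measureReal_def, ← integral_indicator_one hKm]
    exact integral_mono ((integrable_const (1:ℝ)).indicator hKm)
      (f.continuous.integrable_of_hasCompactSupport hfc)
      (indicator_le_urysohn f hf1 hf01)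
  calc μm ψ K = ENNReal.ofReal ((μm ψ K).toReal) :=
        (ENNReal.ofReal_toReal (measure_ne_top _ _)).symm
    _ ≤ ENNReal.ofReal (c ψ) := ENNReal.ofReal_le_ofReal hge
    _ < ENNReal.ofReal r := (ENNReal.ofReal_lt_ofReal_iff hr).2 hψ

lemma isOpen_lt_measure_ball (U : Set ℝ) (hUopen : IsOpen U) (r : ℝ) (hr : 0 ≤ r) :
    IsOpen {ψ : H | ENNReal.ofReal r < μm ψ U} := by
  rw [isOpen_iff_mem_nhds]
  intro ψ₀ hψ₀
  haveI := hfin ψ₀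
  simp only [Set.mem_setOf_eq] at hψ₀
  obtain ⟨K, hKU, hK, hKlt⟩ := hUopen.exists_lt_isCompact hψ₀
  obtain ⟨f, hf1, hf0, hfc, hf01⟩ := exists_continuous_one_zero_of_isCompact hK
    hUopen.isClosed_compl (Set.disjoint_left.mpr fun a ha h2 => h2 (hKU ha))
  set c : H → ℝ := fun ψ => (inner ℂ ψ ((cfc (⇑f : ℝ → ℝ) T) ψ) : ℂ).re with hc
  have hVopen : IsOpen {ψ : H | r < c ψ} := isOpen_lt continuous_const (cont_pairing T f)
  have hmem : ψ₀ ∈ {ψ : H | r < c ψ} := by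
    simp only [Set.mem_setOf_eq, hc]
    rw [← hint f ψ₀]
    have hge : (μm ψ₀ K).toReal ≤ ∫ y, f y ∂(μm ψ₀) := by
      rw [← measureReal_def, ← integral_indicator_one hK.measurableSet]
      exact integral_mono ((integrable_const (1:ℝ)).indicator hK.measurableSet)
        (f.continuous.integrable_of_hasCompactSupport hfc)
        (indicator_le_urysohn f hf1 hf01)
    have : r < (μm ψ₀ K).toReal :=
      (ENNReal.ofReal_lt_iff_lt_toReal hr (measure_ne_top _ _)).1 hKlt
    linarith
  refine Filter.mem_of_superset (hVopen.mem_nhds hmem) ?_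
  intro ψ hψ
  haveI := hfin ψ
  simp only [Set.mem_setOf_eq] at hψ ⊢
  have hle : c ψ ≤ (μm ψ U).toReal := by
    show (inner ℂ ψ ((cfc (⇑f : ℝ → ℝ) T) ψ) : ℂ).re ≤ (μm ψ U).toReal
    rw [← hint f ψ, ← measureReal_def, ← integral_indicator_one hUopen.measurableSet]
    exact integral_mono (f.continuous.integrable_of_hasCompactSupport hfc)
      ((integrable_const (1:ℝ)).indicator hUopen.measurableSet)
      (urysohn_le_indicator f hf0 hf01)
  exact (ENNReal.ofReal_lt_iff_lt_toReal hr (measure_ne_top _ _)).2 (lt_of_lt_of_le hψ hle)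

end Semicont

end Aux

/-- For every `x ∈ ℝ`, both `B₋(x) = {ψ | d⁺_{μ_ψ}(x) = ∞}` and
`B₊(x) = {ψ | d⁻_{μ_ψ}(x) = 0}` are `G_δ` subsets of `H`. -/
theorem stmt_13 {H : Type*} [NormedAddCommGroup H] [InnerProductSpace ℂ H] [CompleteSpace H]
    [TopologicalSpace.SeparableSpace H] (hinf : ¬ FiniteDimensional ℂ H)
    (T : H →L[ℂ] H) (hT : IsSelfAdjoint T)
    (μm : H → Measure ℝ) (hμm : ∀ ψ : H, IsSpectralMeasure T ψ (μm ψ))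
    (x : ℝ) :
    IsGδ {ψ : H | dUp (μm ψ) x = ⊤} ∧ IsGδ {ψ : H | dLow (μm ψ) x = 0} := by
  have hfin : ∀ ψ : H, IsFiniteMeasure (μm ψ) := fun ψ => (hμm ψ).1
  have hint : ∀ (f : C(ℝ, ℝ)) (ψ : H),
      ∫ y, f y ∂(μm ψ) = (inner ℂ ψ ((cfc (⇑f : ℝ → ℝ) T) ψ) : ℂ).re :=
    fun f ψ => (hμm ψ).2.2 f
  constructor
  · have h1 : {ψ : H | dUp (μm ψ) x = ⊤} =
        ⋂ (N : ℕ), ⋂ (k : ℕ), ⋃ ε ∈ Set.Ioo (0:ℝ) (1/((k:ℝ)+1)),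
          {ψ : H | μm ψ (Metric.closedBall x ε) < ENNReal.ofReal (ε ^ N)} := by
      ext ψ
      haveI := hfin ψ
      simp only [Set.mem_setOf_eq, Set.mem_iInter, Set.mem_iUnion, Set.mem_Ioo,
        exists_prop]
      rw [dUp_eq_top_iff]
      constructor
      · intro h N k
        obtain ⟨ε, hε0, hεδ, h'⟩ := h N (1/((k:ℝ)+1)) (by positivity)
        exact ⟨ε, ⟨hε0, hεδ⟩, h'⟩
      · intro h N δ hδ
        obtain ⟨k, hk⟩ := exists_nat_one_div_lt hδ
        obtain ⟨ε, ⟨hε0, hεk⟩, h'⟩ := h N k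
        exact ⟨ε, hε0, hεk.trans hk, h'⟩
    rw [h1]
    refine IsGδ.iInter fun N => IsGδ.iInter fun k => IsOpen.isGδ ?_
    refine isOpen_biUnion fun ε hε => ?_
    exact isOpen_measure_closedBall_lt T μm hfin hint _ (isCompact_closedBall x ε)
      _ (pow_pos hε.1 N)
  · have h2 : {ψ : H | dLow (μm ψ) x = 0} =
        ⋂ (N : ℕ), ⋂ (k : ℕ), ⋃ ε ∈ Set.Ioo (0:ℝ) (1/((k:ℝ)+1)),
          {ψ : H | ENNReal.ofReal (ε ^ (1/((N:ℝ)+1))) < μm ψ (Metric.ball x ε)} := by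
      ext ψ
      haveI := hfin ψ
      simp only [Set.mem_setOf_eq, Set.mem_iInter, Set.mem_iUnion, Set.mem_Ioo,
        exists_prop]
      rw [dLow_eq_zero_iff]
      constructor
      · intro h N k
        obtain ⟨ε, hε0, hεδ, h'⟩ := h N (1/((k:ℝ)+1)) (by positivity)
        exact ⟨ε, ⟨hε0, hεδ⟩, h'⟩
      · intro h N δ hδ
        obtain ⟨k, hk⟩ := exists_nat_one_div_lt hδ
        obtain ⟨ε, ⟨hε0, hεk⟩, h'⟩ := h N k
        exact ⟨ε, hε0, hεk.trans hk, h'⟩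
    rw [h2]
    refine IsGδ.iInter fun N => IsGδ.iInter fun k => IsOpen.isGδ ?_
    refine isOpen_biUnion fun ε hε => ?_
    exact isOpen_lt_measure_ball T μm hfin hint _ isOpen_ball
      _ (le_of_lt (Real.rpow_pos_of_pos hε.1 _))
end
end
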